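/- No guarded, closed, alternation-free modal μ-calculus formula is both magenta and navy; i.e., there is no formula φ such that φ →* μx.ψ and μx.ψ →* φ for some μ-formula μx.ψ, and simultaneously φ →* νy.χ and νy.χ →* φ for some ν-formula νy.χ. -/

import Mathlib

/-!
Every formula trace-equivalent to `φ` is closed and alternation-free, since unfolding preserves
both properties. A subformula of the end of a trace is either a subformula of its start, or it
is created by unfolding some fixpoint formula `δ` on the way, and `δ` is then strictly smaller
than what it creates. By alternation freeness a μ-formula can only be created by a μ-formula and
a ν-formula only by a ν-formula. Descending along creators therefore yields, in the trace class
of `φ`, a μ-formula and a ν-formula that are subformulas of every member of the class, hence of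
each other, hence equal, which is absurd.
-/

/-- Formulas of the modal μ-calculus, with propositions, negated propositions
and variables indexed by natural numbers. -/
inductive Formula : Type
  | prop : ℕ → Formula
  | nprop : ℕ → Formula
  | var : ℕ → Formula
  | or : Formula → Formula → Formula
  | and : Formula → Formula → Formula
  | dia : Formula → Formula
  | box : Formula → Formula
  | mu : ℕ → Formula → Formula
  | nu : ℕ → Formula → Formula

/-- Negation of a modal μ-calculus formula. -/
def Formula.neg : Formula → Formula
  | .prop p => .nprop p
  | .nprop p => .prop p
  | .var x => .var x
  | .or φ ψ => .and φ.neg ψ.neg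
  | .and φ ψ => .or φ.neg ψ.neg
  | .dia φ => .box φ.neg
  | .box φ => .dia φ.neg
  | .mu x φ => .nu x φ.neg
  | .nu x φ => .mu x φ.neg

/-- `x` occurs free in a formula. -/
def Formula.FreeIn (x : ℕ) : Formula → Prop
  | .prop _ => False
  | .nprop _ => False
  | .var y => y = x
  | .or φ ψ => φ.FreeIn x ∨ ψ.FreeIn x
  | .and φ ψ => φ.FreeIn x ∨ ψ.FreeIn x
  | .dia φ => φ.FreeIn x
  | .box φ => φ.FreeIn x
  | .mu y φ => y ≠ x ∧ φ.FreeIn x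
  | .nu y φ => y ≠ x ∧ φ.FreeIn x

/-- `x` has a free occurrence lying within the scope of a ν-operator. -/
def Formula.FreeUnderNu (x : ℕ) : Formula → Prop
  | .prop _ => False
  | .nprop _ => False
  | .var _ => False
  | .or φ ψ => φ.FreeUnderNu x ∨ ψ.FreeUnderNu x
  | .and φ ψ => φ.FreeUnderNu x ∨ ψ.FreeUnderNu x
  | .dia φ => φ.FreeUnderNu x
  | .box φ => φ.FreeUnderNu x
  | .mu y φ => y ≠ x ∧ φ.FreeUnderNu x
  | .nu y φ => y ≠ x ∧ φ.FreeIn x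

/-- `x` has a free occurrence lying within the scope of a μ-operator. -/
def Formula.FreeUnderMu (x : ℕ) : Formula → Prop
  | .prop _ => False
  | .nprop _ => False
  | .var _ => False
  | .or φ ψ => φ.FreeUnderMu x ∨ ψ.FreeUnderMu x
  | .and φ ψ => φ.FreeUnderMu x ∨ ψ.FreeUnderMu x
  | .dia φ => φ.FreeUnderMu x
  | .box φ => φ.FreeUnderMu x
  | .mu y φ => y ≠ x ∧ φ.FreeIn x
  | .nu y φ => y ≠ x ∧ φ.FreeUnderMu x

/-- The (syntactic) subformula relation. -/
inductive Subformula : Formula → Formula → Prop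
  | refl (φ) : Subformula φ φ
  | orL {χ φ ψ} : Subformula χ φ → Subformula χ (.or φ ψ)
  | orR {χ φ ψ} : Subformula χ ψ → Subformula χ (.or φ ψ)
  | andL {χ φ ψ} : Subformula χ φ → Subformula χ (.and φ ψ)
  | andR {χ φ ψ} : Subformula χ ψ → Subformula χ (.and φ ψ)
  | dia {χ φ} : Subformula χ φ → Subformula χ (.dia φ)
  | box {χ φ} : Subformula χ φ → Subformula χ (.box φ)
  | mu {χ φ} (x) : Subformula χ φ → Subformula χ (.mu x φ)
  | nu {χ φ} (x) : Subformula χ φ → Subformula χ (.nu x φ)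

/-- A formula is alternation-free if for every subformula `μx.ψ` no free
occurrence of `x` in `ψ` is in the scope of a ν-operator, and dually. -/
def AlternationFree (φ : Formula) : Prop :=
  (∀ x ψ, Subformula (.mu x ψ) φ → ¬ ψ.FreeUnderNu x) ∧
  (∀ x ψ, Subformula (.nu x ψ) φ → ¬ ψ.FreeUnderMu x)

/-- Substitution of `δ` for the free occurrences of the variable `x`. -/
def Formula.subst (x : ℕ) (δ : Formula) : Formula → Formula
  | .prop p => .prop p
  | .nprop p => .nprop p
  | .var y => if y = x then δ else .var y
  | .or φ ψ => .or (Formula.subst x δ φ) (Formula.subst x δ ψ)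
  | .and φ ψ => .and (Formula.subst x δ φ) (Formula.subst x δ ψ)
  | .dia φ => .dia (Formula.subst x δ φ)
  | .box φ => .box (Formula.subst x δ φ)
  | .mu y φ => if y = x then .mu y φ else .mu y (Formula.subst x δ φ)
  | .nu y φ => if y = x then .nu y φ else .nu y (Formula.subst x δ φ)

/-- The trace-step relation: passing to a direct Boolean or modal subformula,
or unfolding a fixpoint formula. -/
inductive TraceStep : Formula → Formula → Prop
  | orL (φ ψ) : TraceStep (.or φ ψ) φ
  | orR (φ ψ) : TraceStep (.or φ ψ) ψ
  | andL (φ ψ) : TraceStep (.and φ ψ) φ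
  | andR (φ ψ) : TraceStep (.and φ ψ) ψ
  | dia (φ) : TraceStep (.dia φ) φ
  | box (φ) : TraceStep (.box φ) φ
  | mu (x φ) : TraceStep (.mu x φ) (Formula.subst x (.mu x φ) φ)
  | nu (x φ) : TraceStep (.nu x φ) (Formula.subst x (.nu x φ) φ)

/-- The trace relation: reflexive-transitive closure of the trace-step
relation. -/
def Trace : Formula → Formula → Prop := Relation.ReflTransGen TraceStep

/-- A formula is closed if it has no free variables. -/
def Formula.Closed (φ : Formula) : Prop := ∀ x, ¬ φ.FreeIn x

/-- Every free occurrence of `x` in the formula is in the scope of a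
modality. -/
def Formula.GuardedIn (x : ℕ) : Formula → Prop
  | .prop _ => True
  | .nprop _ => True
  | .var y => y ≠ x
  | .or φ ψ => φ.GuardedIn x ∧ ψ.GuardedIn x
  | .and φ ψ => φ.GuardedIn x ∧ ψ.GuardedIn x
  | .dia _ => True
  | .box _ => True
  | .mu y φ => y = x ∨ φ.GuardedIn x
  | .nu y φ => y = x ∨ φ.GuardedIn x

/-- A formula is guarded if every bound variable is guarded inside its
binder. -/
def Formula.Guarded (φ : Formula) : Prop :=
  (∀ x ψ, Subformula (.mu x ψ) φ → ψ.GuardedIn x) ∧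
  (∀ x ψ, Subformula (.nu x ψ) φ → ψ.GuardedIn x)

namespace Formula

def size : Formula → ℕ
  | .prop _ | .nprop _ | .var _ => 1
  | .or φ ψ | .and φ ψ => φ.size + ψ.size + 1
  | .dia φ | .box φ | .mu _ φ | .nu _ φ => φ.size + 1

theorem FreeUnderNu.freeIn {φ : Formula} {x : ℕ} (h : φ.FreeUnderNu x) : φ.FreeIn x := by
  induction φ <;> simp_all [FreeUnderNu, FreeIn] <;> tauto

theorem FreeUnderMu.freeIn {φ : Formula} {x : ℕ} (h : φ.FreeUnderMu x) : φ.FreeIn x := by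
  induction φ <;> simp_all [FreeUnderMu, FreeIn] <;> tauto

theorem subst_of_not_freeIn {φ δ : Formula} {x : ℕ} (h : ¬ φ.FreeIn x) : subst x δ φ = φ := by
  induction φ <;> simp_all [FreeIn, subst]

theorem freeIn_of_freeIn_subst {φ δ : Formula} {x a : ℕ} (h : (subst x δ φ).FreeIn a) :
    δ.FreeIn a ∨ (a ≠ x ∧ φ.FreeIn a) := by
  induction φ with
  | var y => by_cases hy : y = x <;> simp_all [subst, FreeIn]
  | mu y φ ih | nu y φ ih =>
    by_cases hy : y = x
    · subst hy; simp_all [subst, FreeIn]; omega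
    · simp only [subst, hy, if_false, FreeIn] at h ⊢; have := ih h.2; tauto
  | _ => simp_all [subst, FreeIn] <;> tauto

theorem freeUnderNu_of_freeUnderNu_subst {φ δ : Formula} {x a : ℕ} (hδ : ¬ δ.FreeIn a)
    (h : (subst x δ φ).FreeUnderNu a) : φ.FreeUnderNu a := by
  induction φ with
  | var y => by_cases hy : y = x <;> simp_all [subst, FreeUnderNu]; exact hδ h.freeIn
  | mu y φ ih =>
    by_cases hy : y = x <;> simp_all [subst, FreeUnderNu]
  | nu y φ ih =>
    by_cases hy : y = x <;> simp_all [subst, FreeUnderNu]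
    have := freeIn_of_freeIn_subst h.2; tauto
  | _ => simp_all [subst, FreeUnderNu] <;> tauto

theorem freeUnderMu_of_freeUnderMu_subst {φ δ : Formula} {x a : ℕ} (hδ : ¬ δ.FreeIn a)
    (h : (subst x δ φ).FreeUnderMu a) : φ.FreeUnderMu a := by
  induction φ with
  | var y => by_cases hy : y = x <;> simp_all [subst, FreeUnderMu]; exact hδ h.freeIn
  | nu y φ ih =>
    by_cases hy : y = x <;> simp_all [subst, FreeUnderMu]
  | mu y φ ih =>
    by_cases hy : y = x <;> simp_all [subst, FreeUnderMu]
    have := freeIn_of_freeIn_subst h.2; tauto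
  | _ => simp_all [subst, FreeUnderMu] <;> tauto

theorem subst_eq_mu {w a : ℕ} {δ φ ψ : Formula} (h : subst w δ φ = .mu a ψ) :
    φ = .var w ∧ δ = .mu a ψ ∨
      ∃ ψ₀, φ = .mu a ψ₀ ∧ (a = w ∧ ψ₀ = ψ ∨ a ≠ w ∧ subst w δ ψ₀ = ψ) := by
  cases φ <;> simp only [subst] at h <;> (try split_ifs at h) <;> simp_all

theorem subst_eq_nu {w a : ℕ} {δ φ ψ : Formula} (h : subst w δ φ = .nu a ψ) :
    φ = .var w ∧ δ = .nu a ψ ∨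
      ∃ ψ₀, φ = .nu a ψ₀ ∧ (a = w ∧ ψ₀ = ψ ∨ a ≠ w ∧ subst w δ ψ₀ = ψ) := by
  cases φ <;> simp only [subst] at h <;> (try split_ifs at h) <;> simp_all

theorem size_le_size_subst {w : ℕ} {δ φ : Formula} (hf : φ.FreeIn w) :
    δ.size ≤ (subst w δ φ).size := by
  induction φ with
  | prop | nprop => exact hf.elim
  | var y => obtain rfl : y = w := hf; simp [subst]
  | or φ ψ ih₁ ih₂ | and φ ψ ih₁ ih₂ =>
    rcases hf with hf | hf
    · have := ih₁ hf; simp only [subst, size]; omega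
    · have := ih₂ hf; simp only [subst, size]; omega
  | dia φ ih | box φ ih => have := ih hf; simp only [subst, size]; omega
  | mu y φ ih | nu y φ ih => have := ih hf.2; simp only [subst, if_neg hf.1, size]; omega

theorem size_lt_size_subst {w : ℕ} {δ φ : Formula} (hf : φ.FreeIn w) (hne : φ ≠ .var w) :
    δ.size < (subst w δ φ).size := by
  cases φ with
  | prop | nprop => exact hf.elim
  | var y => exact absurd (congrArg var hf) hne
  | or φ ψ | and φ ψ =>
    rcases hf with hf | hf
    · have := size_le_size_subst (δ := δ) hf; simp only [subst, size]; omega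
    · have := size_le_size_subst (δ := δ) hf; simp only [subst, size]; omega
  | dia φ | box φ =>
    have := size_le_size_subst (δ := δ) (φ := φ) hf; simp only [subst, size]; omega
  | mu y φ | nu y φ =>
    have := size_le_size_subst (δ := δ) hf.2; simp only [subst, if_neg hf.1, size]; omega


end Formula

open Formula

namespace Subformula

theorem trans {φ ψ χ : Formula} (h₁ : Subformula φ ψ) (h₂ : Subformula ψ χ) :
    Subformula φ χ := by
  induction h₂ with
  | refl => exact h₁
  | orL _ ih => exact ih.orL
  | orR _ ih => exact ih.orR
  | andL _ ih => exact ih.andL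
  | andR _ ih => exact ih.andR
  | dia _ ih => exact ih.dia
  | box _ ih => exact ih.box
  | mu x _ ih => exact ih.mu x
  | nu x _ ih => exact ih.nu x

theorem size_le {φ ψ : Formula} (h : Subformula φ ψ) : φ.size ≤ ψ.size := by
  induction h with
  | refl => exact le_rfl
  | _ => simp only [size]; omega

theorem eq_or_size_lt {φ ψ : Formula} (h : Subformula φ ψ) : φ = ψ ∨ φ.size < ψ.size := by
  cases h
  · exact .inl rfl
  all_goals exact .inr (by have := ‹Subformula φ _›.size_le; simp only [size]; omega)

theorem antisymm {φ ψ : Formula} (h₁ : Subformula φ ψ) (h₂ : Subformula ψ φ) : φ = ψ :=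
  h₁.eq_or_size_lt.resolve_right (not_lt.2 h₂.size_le)

theorem body {w : ℕ} {δ ψ : Formula} (h : δ = .mu w ψ ∨ δ = .nu w ψ) :
    Subformula ψ δ := by
  rcases h with rfl | rfl
  exacts [.mu w (.refl ψ), .nu w (.refl ψ)]

end Subformula

inductive UnboundSubformula (w : ℕ) : Formula → Formula → Prop
  | refl (φ) : UnboundSubformula w φ φ
  | orL {χ φ ψ} : UnboundSubformula w χ φ → UnboundSubformula w χ (.or φ ψ)
  | orR {χ φ ψ} : UnboundSubformula w χ ψ → UnboundSubformula w χ (.or φ ψ)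
  | andL {χ φ ψ} : UnboundSubformula w χ φ → UnboundSubformula w χ (.and φ ψ)
  | andR {χ φ ψ} : UnboundSubformula w χ ψ → UnboundSubformula w χ (.and φ ψ)
  | dia {χ φ} : UnboundSubformula w χ φ → UnboundSubformula w χ (.dia φ)
  | box {χ φ} : UnboundSubformula w χ φ → UnboundSubformula w χ (.box φ)
  | mu {χ φ} {x : ℕ} : x ≠ w → UnboundSubformula w χ φ → UnboundSubformula w χ (.mu x φ)
  | nu {χ φ} {x : ℕ} : x ≠ w → UnboundSubformula w χ φ → UnboundSubformula w χ (.nu x φ)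

namespace UnboundSubformula

variable {w : ℕ} {χ φ : Formula}

theorem subformula (h : UnboundSubformula w χ φ) : Subformula χ φ := by
  induction h with
  | refl => exact .refl _
  | orL _ ih => exact ih.orL
  | orR _ ih => exact ih.orR
  | andL _ ih => exact ih.andL
  | andR _ ih => exact ih.andR
  | dia _ ih => exact ih.dia
  | box _ ih => exact ih.box
  | mu _ _ ih => exact ih.mu _
  | nu _ _ ih => exact ih.nu _

theorem freeUnderMu {a : ℕ} {ψ : Formula} (h : UnboundSubformula w (.mu a ψ) φ) (ha : a ≠ w)
    (hψ : ψ.FreeIn w) : φ.FreeUnderMu w := by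
  induction h with
  | refl => exact ⟨ha, hψ⟩
  | orL _ ih | andL _ ih => exact Or.inl ih
  | orR _ ih | andR _ ih => exact Or.inr ih
  | dia _ ih | box _ ih => exact ih
  | mu hx _ ih => exact ⟨hx, ih.freeIn⟩
  | nu hx _ ih => exact ⟨hx, ih⟩

theorem freeUnderNu {a : ℕ} {ψ : Formula} (h : UnboundSubformula w (.nu a ψ) φ) (ha : a ≠ w)
    (hψ : ψ.FreeIn w) : φ.FreeUnderNu w := by
  induction h with
  | refl => exact ⟨ha, hψ⟩
  | orL _ ih | andL _ ih => exact Or.inl ih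
  | orR _ ih | andR _ ih => exact Or.inr ih
  | dia _ ih | box _ ih => exact ih
  | mu hx _ ih => exact ⟨hx, ih⟩
  | nu hx _ ih => exact ⟨hx, ih.freeIn⟩

end UnboundSubformula

theorem subformula_subst {ξ δ φ : Formula} {w : ℕ} (h : Subformula ξ (subst w δ φ)) :
    Subformula ξ δ ∨ Subformula ξ φ ∨ ∃ φ₀, UnboundSubformula w φ₀ φ ∧ ξ = subst w δ φ₀ := by
  induction φ generalizing ξ with
  | prop | nprop => cases h; exact .inr <| .inl <| .refl _
  | var y =>
    by_cases hy : y = w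
    · rw [subst, if_pos hy] at h; exact .inl h
    · rw [subst, if_neg hy] at h; cases h; exact .inr <| .inl <| .refl _
  | or φ ψ ih₁ ih₂ =>
    cases h with
    | refl => exact .inr <| .inr ⟨_, .refl _, rfl⟩
    | orL h => exact (ih₁ h).imp_right (Or.imp .orL fun ⟨φ₀, h₀, e⟩ => ⟨φ₀, h₀.orL, e⟩)
    | orR h => exact (ih₂ h).imp_right (Or.imp .orR fun ⟨φ₀, h₀, e⟩ => ⟨φ₀, h₀.orR, e⟩)
  | and φ ψ ih₁ ih₂ =>
    cases h with
    | refl => exact .inr <| .inr ⟨_, .refl _, rfl⟩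
    | andL h => exact (ih₁ h).imp_right (Or.imp .andL fun ⟨φ₀, h₀, e⟩ => ⟨φ₀, h₀.andL, e⟩)
    | andR h => exact (ih₂ h).imp_right (Or.imp .andR fun ⟨φ₀, h₀, e⟩ => ⟨φ₀, h₀.andR, e⟩)
  | dia φ ih =>
    cases h with
    | refl => exact .inr <| .inr ⟨_, .refl _, rfl⟩
    | dia h => exact (ih h).imp_right (Or.imp .dia fun ⟨φ₀, h₀, e⟩ => ⟨φ₀, h₀.dia, e⟩)
  | box φ ih =>
    cases h with
    | refl => exact .inr <| .inr ⟨_, .refl _, rfl⟩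
    | box h => exact (ih h).imp_right (Or.imp .box fun ⟨φ₀, h₀, e⟩ => ⟨φ₀, h₀.box, e⟩)
  | mu y φ ih =>
    by_cases hy : y = w
    · rw [subst, if_pos hy] at h; exact .inr <| .inl h
    rw [subst, if_neg hy] at h
    cases h with
    | refl => exact .inr <| .inr ⟨_, .refl _, by rw [subst, if_neg hy]⟩
    | mu _ h => exact (ih h).imp_right (Or.imp (.mu y) fun ⟨φ₀, h₀, e⟩ => ⟨φ₀, h₀.mu hy, e⟩)
  | nu y φ ih =>
    by_cases hy : y = w
    · rw [subst, if_pos hy] at h; exact .inr <| .inl h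
    rw [subst, if_neg hy] at h
    cases h with
    | refl => exact .inr <| .inr ⟨_, .refl _, by rw [subst, if_neg hy]⟩
    | nu _ h => exact (ih h).imp_right (Or.imp (.nu y) fun ⟨φ₀, h₀, e⟩ => ⟨φ₀, h₀.nu hy, e⟩)

namespace AlternationFree

theorem of_subformula {φ ψ : Formula} (h : Subformula φ ψ) (hψ : AlternationFree ψ) :
    AlternationFree φ :=
  ⟨fun x χ hχ => hψ.1 x χ (hχ.trans h), fun x χ hχ => hψ.2 x χ (hχ.trans h)⟩

theorem subst {w : ℕ} {δ φ : Formula} (hδ : AlternationFree δ) (hcl : δ.Closed)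
    (hφ : Subformula φ δ) : AlternationFree (subst w δ φ) := by
  refine ⟨fun a ψ hs hbad => ?_, fun a ψ hs hbad => ?_⟩
  · rcases subformula_subst hs with h | h | ⟨φ₀, hφ₀, he⟩
    · exact hδ.1 a ψ h hbad
    · exact hδ.1 a ψ (h.trans hφ) hbad
    rcases subst_eq_mu he.symm with ⟨-, rfl⟩ | ⟨ψ₀, rfl, ⟨-, rfl⟩ | ⟨-, rfl⟩⟩
    · exact hδ.1 a ψ (.refl _) hbad
    · exact hδ.1 a ψ₀ (hφ₀.subformula.trans hφ) hbad
    · exact hδ.1 a ψ₀ (hφ₀.subformula.trans hφ) (freeUnderNu_of_freeUnderNu_subst (hcl a) hbad)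
  · rcases subformula_subst hs with h | h | ⟨φ₀, hφ₀, he⟩
    · exact hδ.2 a ψ h hbad
    · exact hδ.2 a ψ (h.trans hφ) hbad
    rcases subst_eq_nu he.symm with ⟨-, rfl⟩ | ⟨ψ₀, rfl, ⟨-, rfl⟩ | ⟨-, rfl⟩⟩
    · exact hδ.2 a ψ (.refl _) hbad
    · exact hδ.2 a ψ₀ (hφ₀.subformula.trans hφ) hbad
    · exact hδ.2 a ψ₀ (hφ₀.subformula.trans hφ) (freeUnderMu_of_freeUnderMu_subst (hcl a) hbad)

end AlternationFree

namespace TraceStep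

variable {φ ψ : Formula}

theorem subformula_or_unfold (h : TraceStep φ ψ) :
    Subformula ψ φ ∨ ∃ w χ, (φ = .mu w χ ∨ φ = .nu w χ) ∧ ψ = subst w φ χ := by
  cases h with
  | orL => exact .inl (.orL (.refl _))
  | orR => exact .inl (.orR (.refl _))
  | andL => exact .inl (.andL (.refl _))
  | andR => exact .inl (.andR (.refl _))
  | dia => exact .inl (.dia (.refl _))
  | box => exact .inl (.box (.refl _))
  | mu w χ => exact .inr ⟨w, χ, .inl rfl, rfl⟩
  | nu w χ => exact .inr ⟨w, χ, .inr rfl, rfl⟩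

theorem closed (h : TraceStep φ ψ) (hφ : φ.Closed) : ψ.Closed := by
  intro a ha
  cases h with
  | mu x χ | nu x χ =>
    rcases freeIn_of_freeIn_subst ha with ha | ⟨hax, ha⟩
    exacts [hφ a ha, hφ a ⟨Ne.symm hax, ha⟩]
  | _ => exact hφ a (by simp [FreeIn, ha])

theorem alternationFree (h : TraceStep φ ψ) (hφ : AlternationFree φ) (hcl : φ.Closed) :
    AlternationFree ψ := by
  rcases h.subformula_or_unfold with h | ⟨w, χ, hχ, rfl⟩
  exacts [hφ.of_subformula h, hφ.subst hcl (.body hχ)]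

end TraceStep

theorem Trace.closed_and_alternationFree {φ ψ : Formula} (h : Trace φ ψ) (hcl : φ.Closed)
    (hφ : AlternationFree φ) : ψ.Closed ∧ AlternationFree ψ := by
  induction h with
  | refl => exact ⟨hcl, hφ⟩
  | tail _ hstep ih => exact ⟨hstep.closed ih.1, hstep.alternationFree ih.2 ih.1⟩

def Creates (δ ξ : Formula) : Prop :=
  ∃ w ψ φ₀, (δ = .mu w ψ ∨ δ = .nu w ψ) ∧ UnboundSubformula w φ₀ ψ ∧ φ₀.FreeIn w ∧
    φ₀ ≠ .var w ∧ ξ = subst w δ φ₀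

namespace Creates

variable {δ ξ : Formula}

theorem size_lt (h : Creates δ ξ) : δ.size < ξ.size := by
  obtain ⟨w, ψ, φ₀, -, -, hf, hne, rfl⟩ := h
  exact size_lt_size_subst hf hne

theorem exists_eq_mu {a : ℕ} {ψ : Formula} (h : Creates δ (.mu a ψ)) (hδ : AlternationFree δ) :
    ∃ w χ, δ = .mu w χ := by
  obtain ⟨w, χ, φ₀, rfl | rfl, hφ₀, hf, hne, he⟩ := h
  · exact ⟨w, χ, rfl⟩
  rcases subst_eq_mu he.symm with ⟨hv, -⟩ | ⟨ψ₀, rfl, ⟨rfl, -⟩ | ⟨haw, -⟩⟩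
  · exact absurd hv hne
  · exact absurd rfl hf.1
  · exact absurd (hφ₀.freeUnderMu haw hf.2) (hδ.2 w χ (.refl _))

theorem exists_eq_nu {a : ℕ} {ψ : Formula} (h : Creates δ (.nu a ψ)) (hδ : AlternationFree δ) :
    ∃ w χ, δ = .nu w χ := by
  obtain ⟨w, χ, φ₀, rfl | rfl, hφ₀, hf, hne, he⟩ := h
  · rcases subst_eq_nu he.symm with ⟨hv, -⟩ | ⟨ψ₀, rfl, ⟨rfl, -⟩ | ⟨haw, -⟩⟩
    · exact absurd hv hne
    · exact absurd rfl hf.1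
    · exact absurd (hφ₀.freeUnderNu haw hf.2) (hδ.1 w χ (.refl _))
  · exact ⟨w, χ, rfl⟩

end Creates

theorem subformula_or_creates_of_subformula_unfold {w : ℕ} {δ ψ ξ : Formula}
    (hδ : δ = .mu w ψ ∨ δ = .nu w ψ) (hs : Subformula ξ (subst w δ ψ)) :
    Subformula ξ δ ∨ Creates δ ξ := by
  rcases subformula_subst hs with h | h | ⟨φ₀, hφ₀, rfl⟩
  · exact .inl h
  · exact .inl (h.trans (.body hδ))
  by_cases hf : φ₀.FreeIn w
  · by_cases hv : φ₀ = .var w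
    · subst hv; simpa [subst] using .inl (.refl δ)
    · exact .inr ⟨w, ψ, φ₀, hδ, hφ₀, hf, hv, rfl⟩
  · rw [subst_of_not_freeIn hf]
    exact .inl (hφ₀.subformula.trans (.body hδ))

theorem Trace.subformula_or_creates {φ ψ ξ : Formula} (h : Trace φ ψ) (hs : Subformula ξ ψ) :
    Subformula ξ φ ∨ ∃ δ, Trace φ δ ∧ Trace δ ψ ∧ Creates δ ξ := by
  induction h using Relation.ReflTransGen.head_induction_on with
  | refl => exact .inl hs
  | head hstep htail ih =>
    rcases ih with h | ⟨δ, h₁, h₂, hc⟩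
    · rcases hstep.subformula_or_unfold with hsub | ⟨w, χ, hχ, rfl⟩
      · exact .inl (h.trans hsub)
      · exact (subformula_or_creates_of_subformula_unfold hχ h).imp_right
          fun hc => ⟨_, .refl, .head hstep htail, hc⟩
    · exact .inr ⟨δ, .head hstep h₁, h₂, hc⟩

def TraceEquiv (φ ψ : Formula) : Prop := Trace φ ψ ∧ Trace ψ φ

theorem exists_common_subformula (P : Formula → Prop) {φ ξ : Formula}
    (hP : ∀ δ ξ, TraceEquiv φ δ → Creates δ ξ → P ξ → P δ) (hξ : TraceEquiv φ ξ) (hPξ : P ξ) :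
    ∃ ζ, P ζ ∧ TraceEquiv φ ζ ∧ ∀ θ, TraceEquiv φ θ → Subformula ζ θ := by
  by_cases hall : ∀ θ, TraceEquiv φ θ → Subformula ξ θ
  · exact ⟨ξ, hPξ, hξ, hall⟩
  push Not at hall
  obtain ⟨θ, hθ, hnot⟩ := hall
  rcases Trace.subformula_or_creates (hθ.2.trans hξ.1) (.refl ξ) with h | ⟨δ, hθδ, hδξ, hc⟩
  · exact absurd h hnot
  have hδ : TraceEquiv φ δ := ⟨hθ.1.trans hθδ, hδξ.trans hξ.2⟩
  exact exists_common_subformula P hP hδ (hP δ ξ hδ hc hPξ)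
termination_by ξ.size
decreasing_by exact hc.size_lt

theorem not_magenta_and_navy_general (φ : Formula) (hclosed : φ.Closed)
    (hfree : AlternationFree φ) :
    ¬ ((∃ x ψ, Trace φ (.mu x ψ) ∧ Trace (.mu x ψ) φ) ∧
       (∃ y χ, Trace φ (.nu y χ) ∧ Trace (.nu y χ) φ)) := by
  rintro ⟨⟨x, ψ, hμ⟩, ⟨y, χ, hν⟩⟩
  have hAF (δ : Formula) (hδ : TraceEquiv φ δ) : AlternationFree δ :=
    (hδ.1.closed_and_alternationFree hclosed hfree).2
  obtain ⟨_, ⟨a, α, rfl⟩, hα, hαsub⟩ := exists_common_subformula (fun ξ => ∃ a α, ξ = .mu a α)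
    (by rintro δ _ hδ hc ⟨a, α, rfl⟩; exact hc.exists_eq_mu (hAF δ hδ)) hμ ⟨x, ψ, rfl⟩
  obtain ⟨_, ⟨b, β, rfl⟩, hβ, hβsub⟩ := exists_common_subformula (fun ξ => ∃ b β, ξ = .nu b β)
    (by rintro δ _ hδ hc ⟨b, β, rfl⟩; exact hc.exists_eq_nu (hAF δ hδ)) hν ⟨y, χ, rfl⟩
  exact Formula.noConfusion ((hαsub _ hβ).antisymm (hβsub _ hα))

/-- No guarded, closed, alternation-free formula is both magenta (trace
equivalent to a μ-formula) and navy (trace equivalent to a ν-formula). -/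
theorem not_magenta_and_navy (φ : Formula) (hclosed : φ.Closed)
    (hguarded : φ.Guarded) (hfree : AlternationFree φ) :
    ¬ ((∃ x ψ, Trace φ (.mu x ψ) ∧ Trace (.mu x ψ) φ) ∧
       (∃ y χ, Trace φ (.nu y χ) ∧ Trace (.nu y χ) φ)) :=
  not_magenta_and_navy_general φ hclosed hfree
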